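/- arXiv:2407.15471 — 4 statements merged into one kernel-verified Lean document; each statement's English description precedes it below -/
import Mathlib

section
/- Let (u_n) be a positive sequence, γ > 1, and (w_n) a positive sequence satisfying u_{n+1} − u_n ≤ −w_n u_n^γ for all n. Then for all n, u_n ≤ ( u_0^{1−γ} + (γ−1) Σ_{k=0}^{n−1} w_k )^{−1/(γ−1)}. -/
/-!
The substitution `v = u ^ (1 - γ)` linearises the recursion: since `t ↦ t ^ (1 - γ)` is convex
and decreasing, its tangent line at `u n` turns `u (n+1) - u n ≤ -w n * u n ^ γ` into
`v (n+1) ≥ v n + (γ - 1) * w n`. Summing gives `v n ≥ v 0 + (γ - 1) * ∑ w`, and raising to the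
negative power `1 / (1 - γ)` returns to `u n`.
-/

open Finset

namespace Real

theorem one_add_mul_self_le_rpow_one_add_of_nonpos {s : ℝ} (hs : -1 < s) {p : ℝ} (hp : p ≤ 0) :
    1 + p * s ≤ (1 + s) ^ p := by
  have hy : 0 < 1 + s := by linarith
  -- Bernoulli with exponent `1 - p ≥ 1` at the base `(1 + s)⁻¹`, then multiply by `1 + s`.
  have hB : 1 + (1 - p) * ((1 + s)⁻¹ - 1) ≤ ((1 + s)⁻¹) ^ (1 - p) := by
    simpa using one_add_mul_self_le_rpow_one_add (s := (1 + s)⁻¹ - 1)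
      (by linarith [inv_pos.2 hy]) (by linarith : 1 ≤ 1 - p)
  have hpow : ((1 + s)⁻¹) ^ (1 - p) * (1 + s) = (1 + s) ^ p := by
    rw [inv_rpow hy.le, ← rpow_neg hy.le, ← rpow_add_one hy.ne']
    ring_nf
  calc 1 + p * s = (1 + (1 - p) * ((1 + s)⁻¹ - 1)) * (1 + s) := by field_simp; ring
    _ ≤ ((1 + s)⁻¹) ^ (1 - p) * (1 + s) := by gcongr
    _ = (1 + s) ^ p := hpow

theorem rpow_add_mul_rpow_sub_one_mul_sub_le {a b p : ℝ} (ha : 0 < a) (hb : 0 < b) (hp : p ≤ 0) :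
    a ^ p + p * a ^ (p - 1) * (b - a) ≤ b ^ p := by
  have h := one_add_mul_self_le_rpow_one_add_of_nonpos (s := b / a - 1)
    (by linarith [div_pos hb ha]) hp
  rw [add_sub_cancel, div_rpow hb.le ha.le, le_div_iff₀ (rpow_pos_of_pos ha p)] at h
  have hap : a ^ p = a ^ (p - 1) * a := by rw [← rpow_add_one ha.ne']; ring_nf
  calc a ^ p + p * a ^ (p - 1) * (b - a) = (1 + p * (b / a - 1)) * a ^ p := by
        rw [hap]; field_simp
    _ ≤ b ^ p := h

end Real

theorem rpow_one_sub_add_mul_le_of_sub_le {a b c γ : ℝ} (ha : 0 < a) (hb : 0 < b) (hγ : 1 ≤ γ)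
    (h : b - a ≤ -(c * a ^ γ)) : a ^ (1 - γ) + (γ - 1) * c ≤ b ^ (1 - γ) := by
  have hslope : (1 - γ) * a ^ (1 - γ - 1) * a ^ γ = 1 - γ := by
    rw [mul_assoc, ← Real.rpow_add ha]; norm_num
  calc a ^ (1 - γ) + (γ - 1) * c
      = a ^ (1 - γ) + (1 - γ) * a ^ (1 - γ - 1) * -(c * a ^ γ) := by
        linear_combination c * hslope
    _ ≤ a ^ (1 - γ) + (1 - γ) * a ^ (1 - γ - 1) * (b - a) := by
        gcongr (a ^ (1 - γ) + ?_)
        exact mul_le_mul_of_nonpos_left h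
          (mul_nonpos_of_nonpos_of_nonneg (by linarith) (Real.rpow_pos_of_pos ha _).le)
    _ ≤ b ^ (1 - γ) := Real.rpow_add_mul_rpow_sub_one_mul_sub_le ha hb (by linarith)

theorem add_sum_le_of_add_le_succ {v d : ℕ → ℝ} (h : ∀ n, v n + d n ≤ v (n + 1)) (n : ℕ) :
    v 0 + ∑ k ∈ range n, d k ≤ v n := by
  have := sum_le_sum fun k (_ : k ∈ range n) ↦ le_sub_iff_add_le'.2 (h k)
  rw [sum_range_sub] at this
  linarith

theorem gronwall_one_step_power (u w : ℕ → ℝ) (γ : ℝ) (hγ : 1 < γ)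
    (hu : ∀ n, 0 < u n) (hw : ∀ n, 0 < w n)
    (hrec : ∀ n, u (n + 1) - u n ≤ -(w n * u n ^ γ)) :
    ∀ n, u n ≤ (u 0 ^ (1 - γ) +
      (γ - 1) * ∑ k ∈ Finset.range n, w k) ^ (-(1 / (γ - 1))) := by
  intro n
  have hsum : u 0 ^ (1 - γ) + (γ - 1) * ∑ k ∈ range n, w k ≤ u n ^ (1 - γ) := by
    rw [mul_sum]
    exact add_sum_le_of_add_le_succ (fun k ↦
      rpow_one_sub_add_mul_le_of_sub_le (hu k) (hu (k + 1)) hγ.le (hrec k)) n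
  have hpos : 0 < u 0 ^ (1 - γ) + (γ - 1) * ∑ k ∈ range n, w k := by
    have := sum_nonneg fun k (_ : k ∈ range n) ↦ (hw k).le
    have := Real.rpow_pos_of_pos (hu 0) (1 - γ)
    nlinarith
  rw [show -(1 / (γ - 1)) = (1 - γ)⁻¹ by rw [one_div, ← inv_neg, neg_sub]]
  exact (Real.le_rpow_inv_iff_of_neg (hu n) hpos (by linarith)).2 hsum
end

section
/- Let R : ℝ^N → ℝ be differentiable with gradient L-Lipschitz on a set containing the segment from θ to θ_η, where for η with 0 < η ≤ 1/β̄, λ ∈ (0,1), ε_a > 0, and s, s_η ∈ ℝ^N defined componentwise by s_η = (1 − β̄η) s + β̄η (∇R(θ))², s ≥ 0, and θ_η = θ − η ∇R(θ)/(ε_a + √s_η) (componentwise division). If additionally η ≤ 2ε_a(1−λ)/L, then R(θ_η) − R(θ) ≤ −λ η Σ_{i=1}^N (∂_i R(θ))² / (ε_a + √(s_η^i)). -/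
/-!
A gradient that is `L`-Lipschitz gives the quadratic upper bound
`R y ≤ R x + ⟪∇R x, y - x⟫ + L/2 ‖y - x‖²`. Along the RMSProp step
`θη - θ = -η ∇R θ / (ε + √sη)` this bound splits into one term per coordinate, and each term is
at most `-lam η (∂ᵢR θ)² / (ε + √sηⁱ)` as soon as `L η / 2 ≤ (1 - lam) ε`, because the
preconditioner `ε + √sηⁱ` is at least `ε`.
-/

open scoped RealInnerProductSpace

section LipschitzGradient

variable {F : Type*} [NormedAddCommGroup F] [InnerProductSpace ℝ F] [CompleteSpace F]
  {f : F → ℝ} {L : ℝ}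

theorem hasDerivAt_comp_add_smul_of_differentiable (hf : Differentiable ℝ f) (x v : F) (t : ℝ) :
    HasDerivAt (fun t : ℝ ↦ f (x + t • v)) ⟪gradient f (x + t • v), v⟫ t := by
  have hline : HasDerivAt (fun t : ℝ ↦ x + t • v) v t := by
    simpa using ((hasDerivAt_id t).smul_const v).const_add x
  simpa [Function.comp_def] using
    (hf (x + t • v)).hasGradientAt.hasFDerivAt.comp_hasDerivAt t hline

theorem inner_gradient_add_smul_sub_le
    (hLip : ∀ x y, ‖gradient f x - gradient f y‖ ≤ L * ‖x - y‖) (x v : F) {t : ℝ} (ht : 0 ≤ t) :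
    ⟪gradient f (x + t • v) - gradient f x, v⟫ ≤ L * t * ‖v‖ ^ 2 :=
  calc ⟪gradient f (x + t • v) - gradient f x, v⟫
      ≤ ‖gradient f (x + t • v) - gradient f x‖ * ‖v‖ := real_inner_le_norm _ _
    _ ≤ L * ‖x + t • v - x‖ * ‖v‖ := by gcongr; exact hLip _ _
    _ = L * t * ‖v‖ ^ 2 := by
      rw [add_sub_cancel_left, norm_smul, Real.norm_of_nonneg ht]; ring

theorem sub_le_inner_gradient_add_of_lipschitz_gradient (hf : Differentiable ℝ f)
    (hLip : ∀ x y, ‖gradient f x - gradient f y‖ ≤ L * ‖x - y‖) (x y : F) :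
    f y - f x ≤ ⟪gradient f x, y - x⟫ + L / 2 * ‖y - x‖ ^ 2 := by
  set v := y - x
  have hderiv := hasDerivAt_comp_add_smul_of_differentiable hf x v
  have hbound (t : ℝ) : HasDerivAt (fun t ↦ t * ⟪gradient f x, v⟫ + L / 2 * t ^ 2 * ‖v‖ ^ 2)
      (⟪gradient f x, v⟫ + L * t * ‖v‖ ^ 2) t :=
    (((hasDerivAt_id t).mul_const _).add
      ((((hasDerivAt_id t).pow 2).const_mul (L / 2)).mul_const _)).congr_deriv
      (by simp only [id, Nat.cast_ofNat]; ring)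
  have key := image_le_of_deriv_right_le_deriv_boundary (a := 0) (b := 1)
    (f := fun t ↦ f (x + t • v) - f x) (f' := fun t ↦ ⟪gradient f (x + t • v), v⟫)
    (fun t _ ↦ ((hderiv t).sub_const _).continuousAt.continuousWithinAt)
    (fun t _ ↦ ((hderiv t).sub_const _).hasDerivWithinAt) (by simp)
    (fun t _ ↦ (hbound t).continuousAt.continuousWithinAt)
    (fun t _ ↦ (hbound t).hasDerivWithinAt)
    (fun t ht ↦ by
      have := inner_gradient_add_smul_sub_le hLip x v ht.1
      rw [inner_sub_left] at this
      linarith)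
    (Set.right_mem_Icc.2 zero_le_one)
  simpa [v] using key

end LipschitzGradient

theorem mul_neg_step_add_sq_le {L η ε lam d g : ℝ} (hL : 0 ≤ L) (hη : 0 ≤ η) (hε : 0 < ε)
    (hεd : ε ≤ d) (hLη : L * η ≤ 2 * ε * (1 - lam)) :
    g * -(η * g / d) + L / 2 * (-(η * g / d)) ^ 2 ≤ -(lam * η * (g ^ 2 / d)) := by
  have hd : 0 < d := hε.trans_le hεd
  have hlam : 0 ≤ 1 - lam := by nlinarith [mul_nonneg hL hη]
  have hcurv : L * η / 2 ≤ (1 - lam) * d := by nlinarith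
  calc g * -(η * g / d) + L / 2 * (-(η * g / d)) ^ 2
      = η * g ^ 2 / d ^ 2 * (L * η / 2) - η * g ^ 2 / d := by field_simp; ring
    _ ≤ η * g ^ 2 / d ^ 2 * ((1 - lam) * d) - η * g ^ 2 / d := by gcongr
    _ = -(lam * η * (g ^ 2 / d)) := by field_simp; ring

theorem EuclideanSpace.inner_add_mul_norm_sq_eq_sum {n : Type*} [Fintype n]
    (x v : EuclideanSpace ℝ n) (c : ℝ) :
    ⟪x, v⟫ + c * ‖v‖ ^ 2 = ∑ i, (x i * v i + c * v i ^ 2) := by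
  rw [PiLp.inner_apply, EuclideanSpace.real_norm_sq_eq, Finset.mul_sum, ← Finset.sum_add_distrib]
  simp [mul_comm]

theorem rmsprop_descent_general (N : ℕ) (R : EuclideanSpace ℝ (Fin N) → ℝ)
    (hR : Differentiable ℝ R) (L : ℝ) (hL : 0 < L)
    (hLip : ∀ x y, ‖gradient R x - gradient R y‖ ≤ L * ‖x - y‖)
    (lam ε η : ℝ)
    (hε : 0 < ε) (hη : 0 < η) (hη2 : η ≤ 2 * ε * (1 - lam) / L)
    (θ θη : EuclideanSpace ℝ (Fin N)) (sη : Fin N → ℝ)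
    (hθη : ∀ i, θη i = θ i - η * gradient R θ i / (ε + Real.sqrt (sη i))) :
    R θη - R θ ≤ -(lam * η * ∑ i, (gradient R θ i) ^ 2 / (ε + Real.sqrt (sη i))) := by
  have hLη : L * η ≤ 2 * ε * (1 - lam) := by
    rw [le_div_iff₀ hL] at hη2
    linarith
  calc R θη - R θ ≤ ⟪gradient R θ, θη - θ⟫ + L / 2 * ‖θη - θ‖ ^ 2 :=
        sub_le_inner_gradient_add_of_lipschitz_gradient hR hLip θ θη
    _ = ∑ i, (gradient R θ i * (θη i - θ i) + L / 2 * (θη i - θ i) ^ 2) :=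
        EuclideanSpace.inner_add_mul_norm_sq_eq_sum _ _ _
    _ ≤ ∑ i, -(lam * η * ((gradient R θ i) ^ 2 / (ε + Real.sqrt (sη i)))) := by
        gcongr with i
        rw [hθη i, sub_sub_cancel_left]
        exact mul_neg_step_add_sq_le hL.le hη.le hε
          (le_add_of_nonneg_right (Real.sqrt_nonneg _)) hLη
    _ = -(lam * η * ∑ i, (gradient R θ i) ^ 2 / (ε + Real.sqrt (sη i))) := by
        rw [Finset.mul_sum, Finset.sum_neg_distrib]

theorem rmsprop_descent (N : ℕ) (R : EuclideanSpace ℝ (Fin N) → ℝ)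
    (hR : Differentiable ℝ R) (L : ℝ) (hL : 0 < L)
    (hLip : ∀ x y, ‖gradient R x - gradient R y‖ ≤ L * ‖x - y‖)
    (βb lam ε η : ℝ) (hβ : 0 < βb) (hlam0 : 0 < lam) (hlam1 : lam < 1)
    (hε : 0 < ε) (hη : 0 < η) (hη1 : η ≤ 1 / βb) (hη2 : η ≤ 2 * ε * (1 - lam) / L)
    (θ θη : EuclideanSpace ℝ (Fin N)) (s sη : Fin N → ℝ)
    (hs : ∀ i, 0 ≤ s i)
    (hsη : ∀ i, sη i = (1 - βb * η) * s i + βb * η * (gradient R θ i) ^ 2)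
    (hθη : ∀ i, θη i = θ i - η * gradient R θ i / (ε + Real.sqrt (sη i))) :
    R θη - R θ ≤ -(lam * η * ∑ i, (gradient R θ i) ^ 2 / (ε + Real.sqrt (sη i))) :=
  rmsprop_descent_general N R hR L hL hLip lam ε η hε hη hη2 θ θη sη hθη
end

section
/- With the RMSProp update θ_{n+1}^i = θ_n^i − η_n ∂_i R(θ_n)/(ε_a + √(s_{n+1}^i)) where s_{n+1} = β_n s_n + (1 − β_n)(∇R(θ_n))², β_n = 1 − β̄η_n, β̄ > 0, 0 < η_n ≤ 1/β̄, ε_a > 0, s_n ≥ 0 componentwise, one has ‖θ_{n+1} − θ_n‖ ≤ √(η_n N / β̄). -/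
/-!
Since `β̄η ≤ 1` and `s ≥ 0`, the new second moment satisfies `s'ᵢ ≥ β̄η (∂ᵢR)²`, so the
denominator `ε + √s'ᵢ` dominates `√(β̄η) |∂ᵢR|`. Each coordinate of the step is therefore at most
`η / √(β̄η) = √(η/β̄)` in absolute value, and summing the `N` squared coordinates gives the bound.
-/

theorem EuclideanSpace.norm_le_sqrt_card_mul {𝕜 ι : Type*} [RCLike 𝕜] [Fintype ι]
    (x : EuclideanSpace 𝕜 ι) {c : ℝ} (h : ∀ i, ‖x i‖ ^ 2 ≤ c) :
    ‖x‖ ≤ √(Fintype.card ι * c) := by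
  rw [EuclideanSpace.norm_eq]
  refine Real.sqrt_le_sqrt ?_
  calc ∑ i, ‖x i‖ ^ 2 ≤ ∑ _i : ι, c := Finset.sum_le_sum fun i _ ↦ h i
    _ = Fintype.card ι * c := by simp

theorem sq_div_add_sqrt_le_inv {a g ε s : ℝ} (ha : 0 < a) (hε : 0 ≤ ε) (hs : a * g ^ 2 ≤ s) :
    (g / (ε + √s)) ^ 2 ≤ a⁻¹ := by
  rcases eq_or_ne g 0 with rfl | hg
  · simp [ha.le]
  have hg2 : 0 < a * g ^ 2 := by positivity
  have hden : a * g ^ 2 ≤ (ε + √s) ^ 2 :=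
    calc a * g ^ 2 ≤ s := hs
      _ = √s ^ 2 := (Real.sq_sqrt (hg2.le.trans hs)).symm
      _ ≤ (ε + √s) ^ 2 := by gcongr; linarith
  rw [div_pow, div_le_iff₀ (hg2.trans_le hden), inv_mul_eq_div, le_div_iff₀ ha]
  linarith

theorem rmsprop_step_bound_general (N : ℕ) (R : EuclideanSpace ℝ (Fin N) → ℝ)
    (βb ε η : ℝ) (hβ : 0 < βb) (hη : 0 < η) (hη1 : η ≤ 1 / βb) (hε : 0 < ε)
    (θn θn1 : EuclideanSpace ℝ (Fin N)) (s s' : Fin N → ℝ)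
    (hs : ∀ i, 0 ≤ s i)
    (hs' : ∀ i, s' i = (1 - βb * η) * s i + (βb * η) * (gradient R θn i) ^ 2)
    (hθ : ∀ i, θn1 i = θn i - η * gradient R θn i / (ε + Real.sqrt (s' i))) :
    ‖θn1 - θn‖ ≤ Real.sqrt (η * N / βb) := by
  have hβη : 0 < βb * η := mul_pos hβ hη
  have hβη1 : βb * η ≤ 1 := by rwa [le_div_iff₀ hβ, mul_comm] at hη1
  have hmoment : ∀ i, βb * η * gradient R θn i ^ 2 ≤ s' i := fun i ↦ by
    rw [hs' i]
    nlinarith [hs i]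
  have hcoord : ∀ i, ‖(θn1 - θn) i‖ ^ 2 ≤ η / βb := fun i ↦ by
    have hstep : (θn1 - θn) i = -(η * (gradient R θn i / (ε + √(s' i)))) := by
      rw [PiLp.sub_apply, hθ i]
      ring
    rw [hstep, norm_neg, norm_mul, mul_pow]
    simp only [Real.norm_eq_abs, sq_abs]
    calc η ^ 2 * (gradient R θn i / (ε + √(s' i))) ^ 2 ≤ η ^ 2 * (βb * η)⁻¹ := by
          gcongr
          exact sq_div_add_sqrt_le_inv hβη hε.le (hmoment i)
      _ = η / βb := by field_simp
  calc ‖θn1 - θn‖ ≤ √(Fintype.card (Fin N) * (η / βb)) :=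
        EuclideanSpace.norm_le_sqrt_card_mul _ hcoord
    _ = √(η * N / βb) := by rw [Fintype.card_fin]; ring_nf

theorem rmsprop_step_bound (N : ℕ) (R : EuclideanSpace ℝ (Fin N) → ℝ)
    (hR : Differentiable ℝ R)
    (βb ε η : ℝ) (hβ : 0 < βb) (hη : 0 < η) (hη1 : η ≤ 1 / βb) (hε : 0 < ε)
    (θn θn1 : EuclideanSpace ℝ (Fin N)) (s s' : Fin N → ℝ)
    (hs : ∀ i, 0 ≤ s i)
    (hs' : ∀ i, s' i = (1 - βb * η) * s i + (βb * η) * (gradient R θn i) ^ 2)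
    (hθ : ∀ i, θn1 i = θn i - η * gradient R θn i / (ε + Real.sqrt (s' i))) :
    ‖θn1 - θn‖ ≤ Real.sqrt (η * N / βb) :=
  rmsprop_step_bound_general N R βb ε η hβ hη hη1 hε θn θn1 s s' hs hs' hθ
end

section
/- Backtracking complexity bound: suppose at iteration 0 the linesearch starts at 1/β̄ and performs p_0 + 1 function evaluations with η_0 = 1/(β̄ f_1^{p_0}), and at each iteration n ≥ 1 it starts at min(f_2 η_{n−1}, 1/β̄) and performs p_n + 1 evaluations with η_n = min(f_2 η_{n−1}, 1/β̄)/f_1^{p_n}, where f_1, f_2 > 1. If η_n ≥ η* > 0 for all n, then the total number of evaluations C_n = 1 + Σ_{k=0}^n (p_k + 1) satisfies C_n ≤ [1 + log(f_2)/log(f_1)]·n + log(f_1²/(β̄η*))/log(f_1). -/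
/-!
Each backtracking step satisfies `η (k+1) * f₁ ^ p (k+1) ≤ f₂ * η k` and the first one
`η 0 * f₁ ^ p 0 = 1 / β̄`; multiplying these telescopes to `η n * f₁ ^ (p 0 + ⋯ + p n) ≤ f₂ ^ n / β̄`.
With `η* ≤ η n` this bounds `f₁ ^ C n` by `f₁ ^ 2 / (β̄ η*) * (f₁ f₂) ^ n`, and taking `logb f₁` gives
the linear bound.
-/

open Finset Real

theorem mul_pow_sum_range_le_pow_mul {q r a : ℝ} {x : ℕ → ℝ} {e : ℕ → ℕ}
    (hq : 0 ≤ q) (hr : 0 ≤ r) (h0 : x 0 * q ^ e 0 ≤ a)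
    (hstep : ∀ k, x (k + 1) * q ^ e (k + 1) ≤ r * x k) (n : ℕ) :
    x n * q ^ (∑ k ∈ range (n + 1), e k) ≤ r ^ n * a := by
  induction n with
  | zero => simpa using h0
  | succ n ih =>
    calc x (n + 1) * q ^ (∑ k ∈ range (n + 2), e k)
        = x (n + 1) * q ^ e (n + 1) * q ^ (∑ k ∈ range (n + 1), e k) := by
          rw [sum_range_succ, pow_add]; ring
      _ ≤ r * x n * q ^ (∑ k ∈ range (n + 1), e k) :=
          mul_le_mul_of_nonneg_right (hstep n) (by positivity)
      _ ≤ r * (r ^ n * a) := by rw [mul_assoc]; exact mul_le_mul_of_nonneg_left ih hr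
      _ = r ^ (n + 1) * a := by ring

theorem natCast_le_logb_of_pow_le {b y : ℝ} {m : ℕ} (hb : 1 < b) (hy : 0 < y) (h : b ^ m ≤ y) :
    (m : ℝ) ≤ logb b y :=
  (le_logb_iff_rpow_le hb hy).2 (by rwa [rpow_natCast])

theorem backtracking_complexity (f1 f2 βb ηstar : ℝ) (p : ℕ → ℕ) (η : ℕ → ℝ)
    (hf1 : 1 < f1) (hf2 : 1 < f2) (hβ : 0 < βb) (hstar : 0 < ηstar)
    (hη0 : η 0 = 1 / (βb * f1 ^ (p 0)))
    (hηn : ∀ n, 1 ≤ n → η n = min (f2 * η (n - 1)) (1 / βb) / f1 ^ (p n))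
    (hlb : ∀ n, ηstar ≤ η n) (n : ℕ)
    (C : ℕ → ℕ) (hC : ∀ m, C m = 1 + ∑ k ∈ Finset.range (m + 1), (p k + 1)) :
    (C n : ℝ) ≤ (1 + Real.log f2 / Real.log f1) * n +
      Real.log (f1 ^ 2 / (βb * ηstar)) / Real.log f1 := by
  have hf1₀ : 0 < f1 := one_pos.trans hf1
  have hf2₀ : 0 < f2 := one_pos.trans hf2
  have hstep (k : ℕ) : η (k + 1) * f1 ^ p (k + 1) ≤ f2 * η k := by
    rw [hηn (k + 1) k.succ_pos, Nat.add_sub_cancel, div_mul_cancel₀ _ (by positivity)]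
    exact min_le_left _ _
  have h0 : η 0 * f1 ^ p 0 ≤ 1 / βb := by
    rw [hη0, one_div_mul_eq_div, div_mul_cancel_right₀ (by positivity), one_div]
  set S := ∑ k ∈ range (n + 1), p k
  have hS : ηstar * f1 ^ S ≤ f2 ^ n * (1 / βb) :=
    (mul_le_mul_of_nonneg_right (hlb n) (by positivity)).trans
      (mul_pow_sum_range_le_pow_mul hf1₀.le hf2₀.le h0 hstep n)
  have hCS : C n = S + (n + 2) := by
    rw [hC n, sum_add_distrib, sum_const, card_range, smul_eq_mul, mul_one]; ring
  have hpow : f1 ^ C n ≤ f1 ^ 2 / (βb * ηstar) * (f1 * f2) ^ n := by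
    rw [hCS, div_mul_eq_mul_div, le_div_iff₀ (by positivity)]
    calc f1 ^ (S + (n + 2)) * (βb * ηstar) = βb * f1 ^ (n + 2) * (ηstar * f1 ^ S) := by ring
      _ ≤ βb * f1 ^ (n + 2) * (f2 ^ n * (1 / βb)) := by gcongr
      _ = f1 ^ 2 * (f1 * f2) ^ n := by field_simp; ring
  calc (C n : ℝ) ≤ logb f1 (f1 ^ 2 / (βb * ηstar) * (f1 * f2) ^ n) :=
        natCast_le_logb_of_pow_le hf1 (by positivity) hpow
    _ = _ := by
      rw [logb_mul (by positivity) (by positivity), logb_pow, logb_mul hf1₀.ne' hf2₀.ne',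
        logb_self_eq_one hf1, logb, logb]
      ring
end
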